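/- Let m ≥ 1 be an integer, let E_m(s) be the s×s real matrices defined below, and let Δ(m) = ∑_{k=0}^{m} [binom(m,k) / (k·λ₁ + (m−k)·λ₂ − (m−4))] · (λ₂/√17)^k · (−λ₁/√17)^{m−k}, where λ₁ = (3−√17)/2 and λ₂ = (3+√17)/2. Then det E_m(m) = Δ(m) · det E_m(m+1); that is, det E_m(m+1)/det E_m(m) = Δ(m)^{−1} whenever the quotient is defined. -/

import Mathlib

/-- The matrix `E_m(s)`, the lower-right `s × s` block of `C_m = A_m - (m-4)·I`:
diagonal entries `2m + 7 - 3s + 3j`, subdiagonal entries `(E)_{j,j-1} = s - j`,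
superdiagonal entries `(E)_{j,j+1} = 2(m - s + j + 2)`, all other entries `0`. -/
noncomputable def paperE (m s : ℕ) : Matrix (Fin s) (Fin s) ℝ :=
  Matrix.of fun j k =>
    if (j : ℕ) = (k : ℕ) then 2 * (m : ℝ) + 7 - 3 * (s : ℝ) + 3 * ((j : ℕ) : ℝ)
    else if (j : ℕ) = (k : ℕ) + 1 then (s : ℝ) - ((j : ℕ) : ℝ)
    else if (k : ℕ) = (j : ℕ) + 1 then 2 * ((m : ℝ) - (s : ℝ) + ((j : ℕ) : ℝ) + 2)
    else 0

/-- The quantity `Δ(m)` of the paper, with `λ₁ = (3-√17)/2` and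
`λ₂ = (3+√17)/2` (so `λ₂ - λ₁ = √17`). -/
noncomputable def paperDelta (m : ℕ) : ℝ :=
  ∑ k ∈ Finset.range (m + 1),
    (Nat.choose m k : ℝ) /
        ((k : ℝ) * ((3 - Real.sqrt 17) / 2) + ((m : ℝ) - (k : ℝ)) * ((3 + Real.sqrt 17) / 2)
          - ((m : ℝ) - 4)) *
      (((3 + Real.sqrt 17) / 2) / Real.sqrt 17) ^ k *
      ((-((3 - Real.sqrt 17) / 2)) / Real.sqrt 17) ^ (m - k)

/-!
Identify `ℝ^{m+1}` with the polynomials of degree at most `m` through their coefficients.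
Then `E_m(m+1)` becomes the operator `L p = (2 + 3X - X²) p' + (mX - (m - 4)) p`. Since
`2 + 3X - X² = (X - λ₂)(λ₁ - X)`, the polynomials `(X - λ₂)^k (λ₁ - X)^(m-k)` are eigenvectors of
`L` with eigenvalues `kλ₁ + (m-k)λ₂ - (m-4)`, which never vanish because `√17` is irrational.
Expanding `1 = ((X - λ₂) + (λ₁ - X))^m / (λ₁ - λ₂)^m` binomially solves `L v = 1`, and the
constant coefficient of `v` is `Δ(m)`. As `E_m(m)` is the minor of `E_m(m+1)` at `(0, 0)`,
Cramer's rule (in adjugate form, so no invertibility is needed) gives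
`det E_m(m) = v₀ · det E_m(m+1)`.
-/

open Polynomial Finset Matrix

theorem Matrix.det_submatrix_succ_succ_eq_det_mul_of_mulVec_eq_single {R : Type*} [CommRing R]
    {n : ℕ} (A : Matrix (Fin (n + 1)) (Fin (n + 1)) R) {v : Fin (n + 1) → R}
    (hv : A *ᵥ v = Pi.single 0 1) :
    (A.submatrix Fin.succ Fin.succ).det = A.det * v 0 := by
  calc (A.submatrix Fin.succ Fin.succ).det = A.adjugate 0 0 := by
        simp [adjugate_fin_succ_eq_det_submatrix]
    _ = (A.adjugate *ᵥ (A *ᵥ v)) 0 := by simp [hv, mulVec_single]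
    _ = A.det * v 0 := by simp [mulVec_mulVec, adjugate_mul, smul_mulVec]

theorem Polynomial.mul_derivative_pow {R : Type*} [CommSemiring R] (r : R[X]) (n : ℕ) :
    r * derivative (r ^ n) = C (n : R) * derivative r * r ^ n := by
  cases n with
  | zero => simp
  | succ n => rw [derivative_pow_succ]; push_cast; ring

noncomputable def paperOp (m : ℕ) : ℝ[X] →ₗ[ℝ] ℝ[X] :=
  LinearMap.mulLeft ℝ (2 + 3 * X - X ^ 2) ∘ₗ derivative +
    LinearMap.mulLeft ℝ (C (m : ℝ) * X - C ((m : ℝ) - 4))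

lemma paperOp_apply (m : ℕ) (p : ℝ[X]) :
    paperOp m p = (2 + 3 * X - X ^ 2) * derivative p + (C (m : ℝ) * X - C ((m : ℝ) - 4)) * p :=
  rfl

-- At `k = 0` the truncated exponent `k - 1` is harmless: its coefficient `2k` vanishes.
lemma paperOp_X_pow (m k : ℕ) :
    paperOp m (X ^ k) = C (2 * k : ℝ) * X ^ (k - 1) + C (3 * k - ((m : ℝ) - 4)) * X ^ k
      + C ((m : ℝ) - k) * X ^ (k + 1) := by
  rw [paperOp_apply, derivative_X_pow]
  cases k with
  | zero =>
    simp only [CharP.cast_eq_zero, map_zero, zero_tsub, pow_zero, mul_one, mul_zero, map_natCast,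
      map_sub, zero_add, zero_sub, neg_sub, sub_zero, pow_one]
    ring
  | succ k =>
    simp only [map_sub, map_mul, map_natCast, map_ofNat, Nat.add_sub_cancel]
    push_cast
    ring

lemma paperE_succ_apply (m : ℕ) (j k : Fin (m + 1)) :
    paperE m (m + 1) j k = (paperOp m (X ^ (k : ℕ))).coeff j := by
  obtain ⟨j, hj⟩ := j
  obtain ⟨_ | k, hk⟩ := k <;>
  · simp only [paperE, of_apply, paperOp_X_pow, coeff_add, coeff_C_mul_X_pow, Nat.add_sub_cancel]
    split_ifs <;> subst_vars <;> first | (push_cast; ring1) | omega | contradiction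

lemma paperE_succ_mulVec_coeff (m : ℕ) {p : ℝ[X]} (hp : p.natDegree ≤ m) :
    paperE m (m + 1) *ᵥ (fun j => p.coeff j) = fun j : Fin (m + 1) => (paperOp m p).coeff j := by
  funext j
  conv_rhs => rw [p.as_sum_range' (m + 1) (by omega)]
  simp only [mulVec, dotProduct, paperE_succ_apply, ← C_mul_X_pow_eq_monomial, map_sum,
    finsetSum_coeff, ← smul_eq_C_mul, map_smul, coeff_smul, smul_eq_mul]
  rw [← Fin.sum_univ_eq_sum_range (fun k => p.coeff k * (paperOp m (X ^ k)).coeff j)]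
  exact sum_congr rfl fun k _ => mul_comm _ _

lemma paperE_eq_submatrix (m : ℕ) :
    paperE m m = (paperE m (m + 1)).submatrix Fin.succ Fin.succ := by
  ext j k
  simp only [paperE, submatrix_apply, of_apply, Fin.val_succ]
  push_cast
  split_ifs <;> ring1

lemma paperOp_eigen {a b : ℝ} (hab : (X - C a) * (C b - X) = (2 + 3 * X - X ^ 2 : ℝ[X]))
    (k l : ℕ) :
    paperOp (k + l) ((X - C a) ^ k * (C b - X) ^ l) =
      C (k * b + l * a - (((k + l : ℕ) : ℝ) - 4)) * ((X - C a) ^ k * (C b - X) ^ l) := by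
  have hk := mul_derivative_pow (X - C a) k
  have hl := mul_derivative_pow (C b - X) l
  simp only [derivative_sub, derivative_X, derivative_C, zero_sub, sub_zero, map_natCast] at hk hl
  rw [paperOp_apply, ← hab, derivative_mul]
  simp only [map_sub, map_add, map_mul, map_natCast, Nat.cast_add]
  linear_combination (C b - X) * (C b - X) ^ l * hk + (X - C a) * (X - C a) ^ k * hl

noncomputable def lam₁ : ℝ := (3 - √17) / 2

noncomputable def lam₂ : ℝ := (3 + √17) / 2

lemma lam₁_sub_lam₂ : lam₁ - lam₂ = -√17 := by
  unfold lam₁ lam₂; ring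

lemma X_sub_lam₂_mul_lam₁_sub_X : (X - C lam₂) * (C lam₁ - X) = (2 + 3 * X - X ^ 2 : ℝ[X]) := by
  have hsum : lam₁ + lam₂ = 3 := by unfold lam₁ lam₂; ring
  have hprod : lam₁ * lam₂ = -2 := by
    unfold lam₁ lam₂
    linear_combination (-1 / 4 : ℝ) * Real.sq_sqrt (show (0 : ℝ) ≤ 17 by norm_num)
  have hsumC := congrArg C hsum
  have hprodC := congrArg C hprod
  simp only [map_add, map_mul, map_neg, map_ofNat] at hsumC hprodC
  linear_combination X * hsumC - hprodC

noncomputable def eigenpoly (m k : ℕ) : ℝ[X] := (X - C lam₂) ^ k * (C lam₁ - X) ^ (m - k)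

noncomputable def eigenval (m k : ℕ) : ℝ := k * lam₁ + (m - k) * lam₂ - (m - 4)

lemma paperOp_eigenpoly {m k : ℕ} (hk : k ≤ m) :
    paperOp m (eigenpoly m k) = C (eigenval m k) * eigenpoly m k := by
  obtain ⟨l, rfl⟩ := Nat.exists_eq_add_of_le hk
  rw [eigenpoly, eigenval, Nat.add_sub_cancel_left, paperOp_eigen X_sub_lam₂_mul_lam₁_sub_X]
  push_cast
  rw [add_sub_cancel_left]

lemma eigenval_ne_zero (m k : ℕ) : eigenval m k ≠ 0 := by
  intro h
  have key : √17 * ((m : ℝ) - 2 * k) = -((m : ℝ) + 8) := by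
    unfold eigenval lam₁ lam₂ at h; linear_combination 2 * h
  rcases eq_or_ne ((m : ℝ) - 2 * k) 0 with h0 | h0
  · rw [h0, mul_zero] at key
    linarith [(m.cast_nonneg : (0 : ℝ) ≤ m)]
  · have h17 : Irrational √(17 : ℕ) := (by norm_num : Nat.Prime 17).irrational_sqrt
    refine h17 ⟨-(m + 8) / (m - 2 * k), ?_⟩
    push_cast
    rw [div_eq_iff h0]
    linear_combination -key

lemma natDegree_eigenpoly_le {m k : ℕ} (hk : k ≤ m) : (eigenpoly m k).natDegree ≤ m := by
  unfold eigenpoly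
  compute_degree
  omega

lemma eigenpoly_coeff_zero (m k : ℕ) : (eigenpoly m k).coeff 0 = (-lam₂) ^ k * lam₁ ^ (m - k) := by
  simp [eigenpoly, coeff_zero_eq_eval_zero]

lemma sum_choose_smul_eigenpoly (m : ℕ) :
    ∑ k ∈ range (m + 1), (m.choose k : ℝ) • eigenpoly m k = C ((lam₁ - lam₂) ^ m) := by
  rw [C_pow, C_sub, show C lam₁ - C lam₂ = (X - C lam₂) + (C lam₁ - X) by ring, add_pow]
  refine sum_congr rfl fun k _ => ?_
  rw [eigenpoly, smul_eq_C_mul, map_natCast]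
  ring

noncomputable def paperSolution (m : ℕ) : ℝ[X] :=
  ∑ k ∈ range (m + 1), (m.choose k / ((lam₁ - lam₂) ^ m * eigenval m k)) • eigenpoly m k

lemma paperOp_paperSolution (m : ℕ) : paperOp m (paperSolution m) = 1 := by
  have hd : (lam₁ - lam₂) ^ m ≠ 0 := by
    rw [lam₁_sub_lam₂]; exact pow_ne_zero _ (neg_ne_zero.mpr (by positivity))
  have hterm : ∀ k ∈ range (m + 1),
      paperOp m ((m.choose k / ((lam₁ - lam₂) ^ m * eigenval m k)) • eigenpoly m k) =
        ((lam₁ - lam₂) ^ m)⁻¹ • ((m.choose k : ℝ) • eigenpoly m k) := by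
    intro k hk
    rw [map_smul, paperOp_eigenpoly (by simpa [Nat.lt_succ_iff] using hk), ← smul_eq_C_mul,
      smul_smul, smul_smul]
    congr 1
    field_simp [eigenval_ne_zero m k]
  rw [paperSolution, map_sum, sum_congr rfl hterm, ← smul_sum, sum_choose_smul_eigenpoly,
    smul_C, smul_eq_mul, inv_mul_cancel₀ hd, map_one]

lemma natDegree_paperSolution_le (m : ℕ) : (paperSolution m).natDegree ≤ m :=
  natDegree_sum_le_of_forall_le _ _ fun k hk =>
    (natDegree_smul_le _ _).trans (natDegree_eigenpoly_le (by simpa [Nat.lt_succ_iff] using hk))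

lemma paperSolution_coeff_zero (m : ℕ) : (paperSolution m).coeff 0 = paperDelta m := by
  have hdelta : paperDelta m = ∑ k ∈ range (m + 1),
      m.choose k / eigenval m k * (lam₂ / √17) ^ k * (-lam₁ / √17) ^ (m - k) := rfl
  rw [hdelta, paperSolution, finsetSum_coeff]
  refine sum_congr rfl fun k hk => ?_
  obtain ⟨l, rfl⟩ := Nat.exists_eq_add_of_le (Nat.lt_succ_iff.mp (mem_range.mp hk))
  rw [coeff_smul, eigenpoly_coeff_zero, smul_eq_mul, lam₁_sub_lam₂, Nat.add_sub_cancel_left]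
  have hμ := eigenval_ne_zero (k + l) k
  have hs : -√17 ≠ 0 := neg_ne_zero.mpr (by positivity)
  calc _ = (k + l).choose k / eigenval (k + l) k * (-lam₂ / -√17) ^ k * (lam₁ / -√17) ^ l := by
        rw [div_pow, div_pow, pow_add]; field_simp
    _ = _ := by rw [neg_div_neg_eq, div_neg, neg_div]

theorem det_paperE_ratio_general (m : ℕ) :
    (paperE m m).det = paperDelta m * (paperE m (m + 1)).det := by
  have hsol : paperE m (m + 1) *ᵥ (fun j => (paperSolution m).coeff j) = Pi.single 0 1 := by
    rw [paperE_succ_mulVec_coeff m (natDegree_paperSolution_le m), paperOp_paperSolution]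
    funext j
    refine Fin.cases ?_ (fun i => ?_) j <;> simp [coeff_one]
  rw [paperE_eq_submatrix, det_submatrix_succ_succ_eq_det_mul_of_mulVec_eq_single _ hsol,
    Fin.val_zero, paperSolution_coeff_zero, mul_comm]

/-- `det E_m(m) = Δ(m) · det E_m(m+1)`; equivalently,
`det E_m(m+1) / det E_m(m) = Δ(m)⁻¹` whenever the quotient is defined. -/
theorem det_paperE_ratio (m : ℕ) (hm : 1 ≤ m) :
    (paperE m m).det = paperDelta m * (paperE m (m + 1)).det :=
  det_paperE_ratio_general m
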